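/- Quadratic barycenter estimate for decomposed maps. There exists an absolute constant C > 0 with the following property. Let σ be the surface measure on S², let a, b ∈ ℝ³, and let w⊥ ∈ L⁴(S², σ; ℝ³) satisfy the orthogonality conditions ∫_{S²} ⟨w⊥(x), ⟨c,x⟩x⟩ dσ(x) = 0 and ∫_{S²} ⟨w⊥(x), c − ⟨c,x⟩x⟩ dσ(x) = 0 for every c ∈ ℝ³. Set w(x) := ⟨a,x⟩x + (b − ⟨b,x⟩x) + w⊥(x). Then | ∫_{S²} |w(x)|² x dσ(x) | ≤ C |a| ‖w‖_{L²(σ)} + C ‖w⊥‖_{L²(σ)} ‖w‖_{L²(σ)}. -/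

import Mathlib

open MeasureTheory RealInnerProductSpace Real

/-- The unit sphere `S² ⊆ ℝ³`. -/
noncomputable def S2 : Set (EuclideanSpace ℝ (Fin 3)) :=
  Metric.sphere (0 : EuclideanSpace ℝ (Fin 3)) 1

/-- The surface measure on `S²` (two-dimensional Hausdorff measure restricted
to the sphere). -/
noncomputable def sphereMeasure : Measure (EuclideanSpace ℝ (Fin 3)) :=
  (μH[2] : Measure (EuclideanSpace ℝ (Fin 3))).restrict S2

/-- First radial vectorial spherical harmonic mode `N₁(a)(x) = ⟨a,x⟩x`. -/
noncomputable def N1 (a x : EuclideanSpace ℝ (Fin 3)) : EuclideanSpace ℝ (Fin 3) :=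
  ⟪a, x⟫ • x

/-- First tangential vectorial spherical harmonic mode `Ψ₁(b)(x) = b − ⟨b,x⟩x`. -/
noncomputable def Psi1 (b x : EuclideanSpace ℝ (Fin 3)) : EuclideanSpace ℝ (Fin 3) :=
  b - ⟪b, x⟫ • x

/-!
Write `w = u + w⊥` with `u = N₁(a) + Ψ₁(b)`. Since `u(-x) = u(x)`, the integrand `|u|² x` is odd
and integrates to zero, so only `(|w|² - |u|²) x` contributes, and pointwise
`||w|² - |u|²| ≤ |w⊥| (|w| + |u|)`. Cauchy–Schwarz and `‖u‖ ≤ ‖w‖` (Pythagoras, as `w⊥` is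
`L²`-orthogonal to `u`) then bound the barycenter by `2 ‖w⊥‖ ‖w‖`.
-/

section L2

variable {α F : Type*} [MeasurableSpace α] {μ : Measure α}
  [NormedAddCommGroup F] {f g : α → F}

lemma integral_norm_mul_norm_le_sqrt (hf : MemLp f 2 μ) (hg : MemLp g 2 μ) :
    ∫ x, ‖f x‖ * ‖g x‖ ∂μ ≤ √(∫ x, ‖f x‖ ^ 2 ∂μ) * √(∫ x, ‖g x‖ ^ 2 ∂μ) := by
  have h := integral_mul_norm_le_Lp_mul_Lq (μ := μ) (f := f) (g := g)
    Real.HolderConjugate.two_two (by rwa [ENNReal.ofReal_ofNat]) (by rwa [ENNReal.ofReal_ofNat])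
  simpa only [rpow_two, ← sqrt_eq_rpow] using h

variable [InnerProductSpace ℝ F]

lemma MeasureTheory.MemLp.integrable_inner (hf : MemLp f 2 μ) (hg : MemLp g 2 μ) :
    Integrable (fun x => ⟪f x, g x⟫) μ :=
  (hf.norm.integrable_mul hg.norm).mono' (hf.1.inner hg.1) <|
    .of_forall fun _ => abs_real_inner_le_norm _ _

lemma integral_norm_add_sq_of_integral_inner_eq_zero (hf : MemLp f 2 μ) (hg : MemLp g 2 μ)
    (hfg : ∫ x, ⟪f x, g x⟫ ∂μ = 0) :
    ∫ x, ‖f x + g x‖ ^ 2 ∂μ = ∫ x, ‖f x‖ ^ 2 ∂μ + ∫ x, ‖g x‖ ^ 2 ∂μ := by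
  have hf2 := hf.norm.integrable_sq
  have hfg2 := (hf.integrable_inner hg).const_mul 2
  have hsum : Integrable (fun x => ‖f x‖ ^ 2 + 2 * ⟪f x, g x⟫) μ := hf2.add hfg2
  simp_rw [norm_add_sq_real]
  rw [integral_add hsum hg.norm.integrable_sq, integral_add hf2 hfg2,
    integral_const_mul, hfg, mul_zero, add_zero]

end L2

lemma abs_norm_add_sq_sub_norm_sq_le {F : Type*} [SeminormedAddCommGroup F] (u v : F) :
    |‖u + v‖ ^ 2 - ‖u‖ ^ 2| ≤ ‖v‖ * ‖u + v‖ + ‖v‖ * ‖u‖ := by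
  have h : |‖u + v‖ - ‖u‖| ≤ ‖v‖ := by simpa using abs_norm_sub_norm_le (u + v) u
  calc |‖u + v‖ ^ 2 - ‖u‖ ^ 2| = |‖u + v‖ - ‖u‖| * (‖u + v‖ + ‖u‖) := by
        rw [sq_sub_sq, abs_mul, abs_of_nonneg (by positivity : 0 ≤ ‖u + v‖ + ‖u‖), mul_comm]
    _ ≤ ‖v‖ * (‖u + v‖ + ‖u‖) := by gcongr
    _ = ‖v‖ * ‖u + v‖ + ‖v‖ * ‖u‖ := mul_add _ _ _

lemma integral_eq_zero_of_odd {G E : Type*} [MeasurableSpace G] [AddGroup G] [MeasurableNeg G]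
    [NormedAddCommGroup E] [NormedSpace ℝ E] (μ : Measure G) [μ.IsNegInvariant] {f : G → E}
    (hf : ∀ x, f (-x) = -f x) : ∫ x, f x ∂μ = 0 := by
  have h := integral_neg_eq_self f μ
  simp only [hf, integral_neg] at h
  have h2 : (2 : ℝ) • ∫ x, f x ∂μ = 0 := by linear_combination (norm := module) -h
  exact (smul_eq_zero.1 h2).resolve_left two_ne_zero

section Barycenter

variable {E F : Type*} [NormedAddCommGroup E] [NormedSpace ℝ E] [MeasurableSpace E]
  [BorelSpace E] [SecondCountableTopology E] [NormedAddCommGroup F] [InnerProductSpace ℝ F]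
  {μ : Measure E}

lemma MeasureTheory.Integrable.smul_self_of_norm_le_one {f : E → ℝ} (hf : Integrable f μ)
    (hμ : ∀ᵐ x ∂μ, ‖x‖ ≤ 1) : Integrable (fun x => f x • x) μ :=
  hf.smul_of_top_left (memLp_top_of_bound aestronglyMeasurable_id 1 hμ)

theorem norm_integral_norm_add_sq_smul_le (hμ : ∀ᵐ x ∂μ, ‖x‖ ≤ 1) {u v : E → F}
    (hu : MemLp u 2 μ) (hv : MemLp v 2 μ) (huv : ∫ x, ⟪u x, v x⟫ ∂μ = 0)
    (hu_bary : ∫ x, ‖u x‖ ^ 2 • x ∂μ = 0) :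
    ‖∫ x, ‖u x + v x‖ ^ 2 • x ∂μ‖ ≤
      2 * √(∫ x, ‖v x‖ ^ 2 ∂μ) * √(∫ x, ‖u x + v x‖ ^ 2 ∂μ) := by
  have hw : MemLp (fun x => u x + v x) 2 μ := hu.add hv
  have hu_le : √(∫ x, ‖u x‖ ^ 2 ∂μ) ≤ √(∫ x, ‖u x + v x‖ ^ 2 ∂μ) := by
    rw [integral_norm_add_sq_of_integral_inner_eq_zero hu hv huv]
    exact sqrt_le_sqrt (le_add_of_nonneg_right (integral_nonneg fun _ => by positivity))
  have hbound : Integrable (fun x => ‖v x‖ * ‖u x + v x‖ + ‖v x‖ * ‖u x‖) μ :=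
    (hv.norm.integrable_mul hw.norm).add (hv.norm.integrable_mul hu.norm)
  calc ‖∫ x, ‖u x + v x‖ ^ 2 • x ∂μ‖
      = ‖∫ x, (‖u x + v x‖ ^ 2 - ‖u x‖ ^ 2) • x ∂μ‖ := by
        rw [← sub_zero (∫ x, _ ∂μ), ← hu_bary,
          ← integral_sub (hw.norm.integrable_sq.smul_self_of_norm_le_one hμ)
            (hu.norm.integrable_sq.smul_self_of_norm_le_one hμ)]
        simp_rw [sub_smul]
    _ ≤ ∫ x, ‖v x‖ * ‖u x + v x‖ + ‖v x‖ * ‖u x‖ ∂μ := by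
        refine norm_integral_le_of_norm_le hbound ?_
        filter_upwards [hμ] with x hx
        rw [norm_smul, Real.norm_eq_abs]
        exact (mul_le_of_le_one_right (abs_nonneg _) hx).trans
          (abs_norm_add_sq_sub_norm_sq_le _ _)
    _ = ∫ x, ‖v x‖ * ‖u x + v x‖ ∂μ + ∫ x, ‖v x‖ * ‖u x‖ ∂μ :=
        integral_add (hv.norm.integrable_mul hw.norm) (hv.norm.integrable_mul hu.norm)
    _ ≤ √(∫ x, ‖v x‖ ^ 2 ∂μ) * √(∫ x, ‖u x + v x‖ ^ 2 ∂μ) +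
          √(∫ x, ‖v x‖ ^ 2 ∂μ) * √(∫ x, ‖u x‖ ^ 2 ∂μ) :=
        add_le_add (integral_norm_mul_norm_le_sqrt hv hw) (integral_norm_mul_norm_le_sqrt hv hu)
    _ ≤ 2 * √(∫ x, ‖v x‖ ^ 2 ∂μ) * √(∫ x, ‖u x + v x‖ ^ 2 ∂μ) := by
        nlinarith [mul_le_mul_of_nonneg_left hu_le (sqrt_nonneg (∫ x, ‖v x‖ ^ 2 ∂μ))]

end Barycenter

noncomputable def sphericalParam (p : Fin 2 → ℝ) : EuclideanSpace ℝ (Fin 3) :=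
  WithLp.toLp 2 ![cos (p 0) * sin (p 1), sin (p 0) * sin (p 1), cos (p 1)]

lemma contDiff_sphericalParam : ContDiff ℝ 1 sphericalParam :=
  (EuclideanSpace.equiv (Fin 3) ℝ).symm.contDiff.comp <| contDiff_pi.2 fun i => by
    fin_cases i <;> simp <;> fun_prop

lemma S2_subset_image_sphericalParam : S2 ⊆ sphericalParam '' Metric.closedBall 0 π := by
  intro x hx
  have hx1 : x 0 ^ 2 + x 1 ^ 2 + x 2 ^ 2 = 1 := by
    have := EuclideanSpace.real_norm_sq_eq x
    simp_all [S2, Fin.sum_univ_three]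
  have hx2 : |x 2| ≤ 1 := (sq_le_one_iff_abs_le_one _).1 (by nlinarith)
  set z : ℂ := ⟨x 0, x 1⟩
  have hz : ‖z‖ = sin (arccos (x 2)) := by
    rw [sin_arccos, Complex.norm_def, Complex.normSq_mk]
    congr 1
    linarith
  refine ⟨![z.arg, arccos (x 2)], mem_closedBall_zero_iff.2 <|
    (pi_norm_le_iff_of_nonneg pi_pos.le).2 fun i => ?_, ?_⟩
  · fin_cases i
    · exact Complex.abs_arg_le_pi z
    · simpa [abs_of_nonneg (arccos_nonneg _)] using arccos_le_pi _
  · ext i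
    fin_cases i
    · simp [sphericalParam, ← hz, mul_comm, Complex.norm_mul_cos_arg, z]
    · simp [sphericalParam, ← hz, mul_comm, Complex.norm_mul_sin_arg, z]
    · simp [sphericalParam, cos_arccos (abs_le.1 hx2).1 (abs_le.1 hx2).2]

lemma measurableSet_S2 : MeasurableSet S2 := Metric.isClosed_sphere.measurableSet

lemma sphereMeasure_ae_norm_eq_one : ∀ᵐ x ∂sphereMeasure, ‖x‖ = 1 := by
  filter_upwards [ae_restrict_mem measurableSet_S2] with x hx
  simpa [S2] using hx

instance : IsFiniteMeasure sphereMeasure := by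
  refine ⟨?_⟩
  obtain ⟨K, hK⟩ := contDiff_sphericalParam.locallyLipschitz.locallyLipschitzOn
    |>.exists_lipschitzOnWith_of_compact (isCompact_closedBall (0 : Fin 2 → ℝ) π)
  have hball : μH[2] (Metric.closedBall (0 : Fin 2 → ℝ) π) < ⊤ := by
    have hvol : (μH[2] : Measure (Fin 2 → ℝ)) = volume := by
      simpa using hausdorffMeasure_pi_real (ι := Fin 2)
    rw [hvol]
    exact (isCompact_closedBall _ _).measure_lt_top
  calc sphereMeasure Set.univ = μH[2] S2 := Measure.restrict_apply_univ _
    _ ≤ μH[2] (sphericalParam '' Metric.closedBall 0 π) :=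
      measure_mono S2_subset_image_sphericalParam
    _ ≤ K ^ (2 : ℝ) * μH[2] (Metric.closedBall (0 : Fin 2 → ℝ) π) :=
      hK.hausdorffMeasure_image_le zero_le_two
    _ < ⊤ := ENNReal.mul_lt_top (by simp) hball

instance : sphereMeasure.IsNegInvariant := by
  have hS2 : Neg.neg ⁻¹' S2 = S2 := by ext x; simp [S2]
  refine ⟨?_⟩
  rw [Measure.neg, sphereMeasure]
  conv_lhs => rw [← hS2]
  rw [← Measure.restrict_map measurable_neg measurableSet_S2,
    show Neg.neg = ⇑(IsometryEquiv.neg (EuclideanSpace ℝ (Fin 3))) from rfl,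
    IsometryEquiv.map_hausdorffMeasure]

lemma Continuous.memLp_sphereMeasure {F : Type*} [NormedAddCommGroup F]
    {f : EuclideanSpace ℝ (Fin 3) → F} (hf : Continuous f) (p : ENNReal) :
    MemLp f p sphereMeasure := by
  obtain ⟨C, hC⟩ :=
    (isCompact_sphere (0 : EuclideanSpace ℝ (Fin 3)) 1).exists_bound_of_continuousOn hf.continuousOn
  refine MemLp.of_bound hf.aestronglyMeasurable C ?_
  filter_upwards [ae_restrict_mem measurableSet_S2] with x hx using hC x hx

lemma continuous_N1 (a : EuclideanSpace ℝ (Fin 3)) : Continuous (N1 a) := by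
  unfold N1; fun_prop

lemma continuous_Psi1 (b : EuclideanSpace ℝ (Fin 3)) : Continuous (Psi1 b) := by
  unfold Psi1; fun_prop

@[simp]
lemma N1_neg (a x : EuclideanSpace ℝ (Fin 3)) : N1 a (-x) = N1 a x := by
  simp [N1]

@[simp]
lemma Psi1_neg (b x : EuclideanSpace ℝ (Fin 3)) : Psi1 b (-x) = Psi1 b x := by
  simp [Psi1]

/-- Quadratic barycenter estimate for decomposed maps: there is an absolute
constant `C > 0` such that whenever `w = N₁(a) + Ψ₁(b) + w⊥` with
`w⊥ ∈ L⁴(S²;ℝ³)` orthogonal in `L²` to all first modes `N₁(c)`, `Ψ₁(c)`, one has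
`|∫_{S²} |w|² x dσ| ≤ C|a|‖w‖_{L²} + C‖w⊥‖_{L²}‖w‖_{L²}`. -/
theorem quadratic_barycenter_estimate :
    ∃ C : ℝ, 0 < C ∧
      ∀ (a b : EuclideanSpace ℝ (Fin 3))
        (wp : EuclideanSpace ℝ (Fin 3) → EuclideanSpace ℝ (Fin 3)),
        MemLp wp 4 sphereMeasure →
        (∀ c : EuclideanSpace ℝ (Fin 3), (∫ x, ⟪wp x, N1 c x⟫ ∂sphereMeasure) = 0) →
        (∀ c : EuclideanSpace ℝ (Fin 3), (∫ x, ⟪wp x, Psi1 c x⟫ ∂sphereMeasure) = 0) →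
        ‖∫ x, ‖N1 a x + Psi1 b x + wp x‖ ^ 2 • x ∂sphereMeasure‖ ≤
          C * ‖a‖ *
            Real.sqrt (∫ x, ‖N1 a x + Psi1 b x + wp x‖ ^ 2 ∂sphereMeasure) +
          C * Real.sqrt (∫ x, ‖wp x‖ ^ 2 ∂sphereMeasure) *
            Real.sqrt (∫ x, ‖N1 a x + Psi1 b x + wp x‖ ^ 2 ∂sphereMeasure) := by
  refine ⟨2, two_pos, fun a b wp hwp hN hΨ => ?_⟩
  have hN1 := (continuous_N1 a).memLp_sphereMeasure 2
  have hPsi1 := (continuous_Psi1 b).memLp_sphereMeasure 2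
  have hwp2 : MemLp wp 2 sphereMeasure := hwp.mono_exponent (by norm_num)
  have horth : ∫ x, ⟪N1 a x + Psi1 b x, wp x⟫ ∂sphereMeasure = 0 := by
    simp_rw [inner_add_left, real_inner_comm (wp _)]
    rw [integral_add (hwp2.integrable_inner hN1) (hwp2.integrable_inner hPsi1), hN a, hΨ b,
      add_zero]
  have hodd : ∫ x, ‖N1 a x + Psi1 b x‖ ^ 2 • x ∂sphereMeasure = 0 :=
    integral_eq_zero_of_odd _ fun x => by simp
  calc _ ≤ 2 * √(∫ x, ‖wp x‖ ^ 2 ∂sphereMeasure) *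
          √(∫ x, ‖N1 a x + Psi1 b x + wp x‖ ^ 2 ∂sphereMeasure) :=
        norm_integral_norm_add_sq_smul_le (sphereMeasure_ae_norm_eq_one.mono fun _ h => h.le)
          (hN1.add hPsi1) hwp2 horth hodd
    _ ≤ _ := le_add_of_nonneg_left (by positivity)
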